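/- Let S ⊆ R be SRSs over Σ_A and let rotate_rel(S,R) = (S', rotate(R)) where S' = {W ℓ → B r | (ℓ → r) ∈ S}. Then S' is string terminating relative to rotate(R) (i.e., →_{S'} is terminating relative to →_{rotate(R)}) if and only if S is cycle terminating relative to R (i.e., ∘→_S is terminating relative to ∘→_R). -/

import Mathlib

/-!
Soundness, by contraposition: a cycle step `[ℓ w] ∘→ [r w]` is simulated by `W ℓ w E → B r w E`,
after which `rot(Σ_A)` turns `B x E` into `W y E` for any rotation `y` of `x`, in particular into
the `W`-form of the next cycle step.

Completeness, by contraposition: every rule of `rotate(R)` has exactly one state symbol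
(`B W G L R F f`) on each side, so the number of state symbols is invariant, and infinitely many
`S'`-steps happen at the same state index `i`. The region governed by the `i`-th state symbol
always has one of a few block shapes, each encoding a cycle; a step rotates this cycle, performs
the cycle step `ℓ → r` when it applies `W ℓ → B r` at index `i`, or leaves it alone. Discarding
the rotations leaves an infinite `∘→_R`-sequence with infinitely many `∘→_S`-steps.
-/

namespace CycleRewriting

/-- A binary relation is terminating if there is no infinite reduction sequence. -/
def Terminating {beta : Type*} (r : beta → beta → Prop) : Prop :=
  ¬ ∃ f : ℕ → beta, ∀ n : ℕ, r (f n) (f (n + 1))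

/-- `r₁` is terminating relative to `r₂` iff every infinite `r₂`-sequence contains only
finitely many `r₁`-steps. -/
def RelTerminating {beta : Type*} (r₁ r₂ : beta → beta → Prop) : Prop :=
  ¬ ∃ f : ℕ → beta, (∀ n : ℕ, r₂ (f n) (f (n + 1))) ∧
      {n : ℕ | r₁ (f n) (f (n + 1))}.Infinite

/-- The string rewrite relation of an SRS `R`. -/
def Step {α : Type*} (R : Set (List α × List α)) (x y : List α) : Prop :=
  ∃ u v l r, (l, r) ∈ R ∧ x = u ++ l ++ v ∧ y = u ++ r ++ v

/-- The prefix rewrite relation of an SRS `R`. -/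
def PrefixStep {α : Type*} (R : Set (List α × List α)) (x y : List α) : Prop :=
  ∃ l r w, (l, r) ∈ R ∧ x = l ++ w ∧ y = r ++ w

/-- The rotation equivalence `u ~ v` iff `u = w₁w₂` and `v = w₂w₁`. -/
def Sim {α : Type*} (u v : List α) : Prop :=
  ∃ w₁ w₂, u = w₁ ++ w₂ ∧ v = w₂ ++ w₁

/-- The cycle rewrite relation of an SRS `R` (on representatives of `Sim`-classes):
`[u] ∘→_R [v]` iff there are a rule `(l, r) ∈ R` and `w` with `l ++ w ∈ [u]` and
`r ++ w ∈ [v]`. -/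
def CycleStep {α : Type*} (R : Set (List α × List α)) (x y : List α) : Prop :=
  ∃ l r w, (l, r) ∈ R ∧ Sim (l ++ w) x ∧ Sim (r ++ w) y

/-- The shift relation `↷`: move the first symbol of a string to its end. -/
def Rot {α : Type*} (u v : List α) : Prop :=
  ∃ a w, u = a :: w ∧ v = w ++ [a]

/-- `k`-fold composition of a relation. -/
def RelPow {beta : Type*} (r : beta → beta → Prop) : ℕ → beta → beta → Prop
  | 0 => Eq
  | n + 1 => Relation.Comp r (RelPow r n)

/-- `lenSRS R` is the maximal length of a left-hand side of a rule of `R`. -/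
noncomputable def lenSRS {α : Type*} (R : Set (List α × List α)) : ℕ :=
  sSup ((fun p : List α × List α => p.1.length) '' R)

/-- The alphabet of `rot Σ_A`/`rotate R`: the original alphabet `Σ_A`, four fresh
copies `Σ_B, Σ_C, Σ_D, Σ_E`, and fresh symbols `B, E, W, R, G, O, C, L, S, F, f`. -/
inductive RotSym (α : Type*) where
  | ca : α → RotSym α            -- Σ_A
  | cb : α → RotSym α            -- Σ_B
  | cc : α → RotSym α            -- Σ_C
  | cd : α → RotSym α            -- Σ_D
  | ce : α → RotSym α            -- Σ_E
  | symB : RotSym α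
  | symE : RotSym α
  | symW : RotSym α
  | symR : RotSym α
  | symG : RotSym α
  | symO : RotSym α
  | symC : RotSym α
  | symL : RotSym α
  | symS : RotSym α
  | symF : RotSym α
  | symf : RotSym α

open RotSym in
/-- The string rewrite system `rot Σ_A`. -/
def rotSRS (α : Type*) : Set (List (RotSym α) × List (RotSym α)) :=
  { p | p = ([symB, symE], [symW, symE]) ∨                                    -- rotA
        (∃ a : α, p = ([symB, ca a], [symO, symC, cd a, symG])) ∨             -- rotB
        (∃ a : α, p = ([symG, ca a], [cd a, symG])) ∨                         -- rotC
        (∃ a : α, p = ([symG, ca a], [symL, cc a, symS])) ∨                   -- rotD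
        p = ([symG, symE], [symF, symE]) ∨                                    -- rotE
        (∃ c d : α, p = ([cd d, symL, cc c], [symL, cc c, cb d])) ∨           -- rotF
        (∃ c : α, p = ([symC, symL, cc c], [ce c, symC, symR])) ∨             -- rotG
        (∃ b : α, p = ([symR, cb b], [cd b, symR])) ∨                         -- rotH
        (∃ a : α, p = ([symR, symS, ca a], [symL, cc a, symS])) ∨             -- rotI
        p = ([symR, symS, symE], [symF, symE]) ∨                              -- rotJ
        (∃ d : α, p = ([cd d, symF], [symF, ca d])) ∨                         -- rotK
        p = ([symC, symF], [symf]) ∨                                          -- rotL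
        (∃ e : α, p = ([ce e, symf], [symf, ca e])) ∨                         -- rotM
        p = ([symO, symf], [symW]) }                                          -- rotN

open RotSym in
/-- The transformation `rotate`: `rot Σ_A` plus `W ℓ → B r` for every rule `ℓ → r`. -/
def rotateSRS {α : Type*} (R : Set (List α × List α)) :
    Set (List (RotSym α) × List (RotSym α)) :=
  rotSRS α ∪ { p | ∃ l r, (l, r) ∈ R ∧ p = (symW :: l.map ca, symB :: r.map ca) }

open Relation

section Sequences

variable {β : Type*}

theorem exists_path_of_reflTransGen {r : β → β → Prop} {a b : β} (h : ReflTransGen r a b) :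
    ∃ (m : ℕ) (p : ℕ → β), p 0 = a ∧ p m = b ∧ ∀ i < m, r (p i) (p (i + 1)) := by
  induction h using ReflTransGen.head_induction_on with
  | refl => exact ⟨0, fun _ => b, rfl, rfl, by simp⟩
  | head hac _ ih =>
    obtain ⟨m, p, hp0, hpm, hp⟩ := ih
    refine ⟨m + 1, fun | 0 => _ | i + 1 => p i, rfl, hpm, ?_⟩
    rintro (_ | i) hi
    · simpa [hp0] using hac
    · exact hp i (by omega)

/-- `segmentIndex m k = (n, i)`: the `k`-th entry of the concatenation of segments of lengths
`m 0 + 1, m 1 + 1, …` is the `i`-th entry of segment `n`. -/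
def segmentIndex (m : ℕ → ℕ) : ℕ → ℕ × ℕ
  | 0 => (0, 0)
  | k + 1 =>
    let (n, i) := segmentIndex m k
    if i < m n then (n, i + 1) else (n + 1, 0)

def segmentStart (m : ℕ → ℕ) : ℕ → ℕ
  | 0 => 0
  | n + 1 => segmentStart m n + m n + 1

theorem segmentIndex_snd_le (m : ℕ → ℕ) (k : ℕ) :
    (segmentIndex m k).2 ≤ m (segmentIndex m k).1 := by
  cases k with
  | zero => simp [segmentIndex]
  | succ k =>
    simp only [segmentIndex]
    split_ifs with h
    · simpa using h
    · simp

theorem segmentIndex_add {m : ℕ → ℕ} {k n : ℕ} (h : segmentIndex m k = (n, 0)) :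
    ∀ i ≤ m n, segmentIndex m (k + i) = (n, i) := by
  intro i hi
  induction i with
  | zero => exact h
  | succ i ih => simp [segmentIndex, ih (by omega), show i < m n by omega]

theorem segmentIndex_segmentStart (m : ℕ → ℕ) (n : ℕ) :
    segmentIndex m (segmentStart m n) = (n, 0) := by
  induction n with
  | zero => rfl
  | succ n ih => simp [segmentStart, segmentIndex, segmentIndex_add ih (m n) le_rfl]

theorem strictMono_segmentStart (m : ℕ → ℕ) : StrictMono (segmentStart m) :=
  strictMono_nat_of_lt_succ fun n => by simp [segmentStart]

theorem exists_seq_of_paths {r : β → β → Prop} (q : ℕ → ℕ → β) (m : ℕ → ℕ)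
    (hq : ∀ n, ∀ i ≤ m n, r (q n i) (q n (i + 1))) (hjoin : ∀ n, q n (m n + 1) = q (n + 1) 0) :
    ∃ g : ℕ → β, (∀ k, r (g k) (g (k + 1))) ∧
      ∀ n, ∀ i ≤ m n + 1, g (segmentStart m n + i) = q n i := by
  set g := fun k => q (segmentIndex m k).1 (segmentIndex m k).2
  refine ⟨g, fun k => ?_, fun n i hi => ?_⟩
  · have hle := segmentIndex_snd_le m k
    simp only [g, segmentIndex]
    split_ifs with h
    · exact hq _ _ hle
    · rw [← hjoin, show (segmentIndex m k).2 = m (segmentIndex m k).1 by omega]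
      exact hq _ _ le_rfl
  · rcases Nat.lt_or_ge i (m n + 1) with h | h
    · simp [g, segmentIndex_add (segmentIndex_segmentStart m n) i (by omega)]
    · obtain rfl : i = m n + 1 := by omega
      rw [← Nat.add_assoc, show segmentStart m n + m n + 1 = segmentStart m (n + 1) from rfl]
      simp [g, segmentIndex_segmentStart, hjoin]

theorem not_relTerminating_of_reflTransGen {r₁ r₂ : β → β → Prop} (f y : ℕ → β)
    (hstep : ∀ n, r₂ (f n) (y n)) (hpath : ∀ n, ReflTransGen r₂ (y n) (f (n + 1)))
    (hinf : {n | r₁ (f n) (y n)}.Infinite) : ¬ RelTerminating r₁ r₂ := by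
  choose m p hp0 hpm hp using fun n => exists_path_of_reflTransGen (hpath n)
  let q : ℕ → ℕ → β := fun n i => match i with | 0 => f n | i + 1 => p n i
  have hq : ∀ n, ∀ i ≤ m n, r₂ (q n i) (q n (i + 1)) := by
    rintro n (_ | i) hi
    · simpa [q, hp0] using hstep n
    · exact hp n i (by omega)
  obtain ⟨g, hg, hgq⟩ := exists_seq_of_paths q m hq hpm
  refine not_not.2 ⟨g, hg, (hinf.image (strictMono_segmentStart m).injective.injOn).mono ?_⟩
  rintro _ ⟨n, hn, rfl⟩
  have h0 := hgq n 0 (Nat.zero_le _)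
  have h1 := hgq n 1 (by omega)
  simp only [Nat.add_zero] at h0
  simp only [Set.mem_ofPred_eq, h0, h1, q, hp0]
  exact hn

/-- The `E`-steps are absorbed into the preceding `r₂`-step. -/
theorem not_relTerminating_of_absorbing {r₁ r₂ E : β → β → Prop}
    (h₁ : ∀ x y z, r₁ x y → E y z → r₁ x z) (h₂ : ∀ x y z, r₂ x y → E y z → r₂ x z)
    (c : ℕ → β) (hc : ∀ m, E (c m) (c (m + 1)) ∨ r₂ (c m) (c (m + 1)))
    (h₁₂ : ∀ m, r₁ (c m) (c (m + 1)) → r₂ (c m) (c (m + 1)))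
    (hinf : {m | r₁ (c m) (c (m + 1))}.Infinite) : ¬ RelTerminating r₁ r₂ := by
  set P : ℕ → Prop := fun m => r₂ (c m) (c (m + 1))
  have hP : (Set.ofPred P).Infinite := hinf.mono h₁₂
  have hgap : ∀ j d, Nat.nth P j + 1 + d ≤ Nat.nth P (j + 1) →
      ReflTransGen E (c (Nat.nth P j + 1)) (c (Nat.nth P j + 1 + d)) := by
    intro j d
    induction d with
    | zero => exact fun _ => .refl
    | succ d ih =>
      intro hd
      have hnP : ¬ P (Nat.nth P j + 1 + d) := fun h =>
        absurd (Nat.le_nth_of_lt_nth_succ (k := j) (by omega) h) (by omega)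
      exact (ih (by omega)).tail ((hc _).resolve_right hnP)
  have hnext : ∀ j, ReflTransGen E (c (Nat.nth P j + 1)) (c (Nat.nth P (j + 1))) := by
    intro j
    have hlt : Nat.nth P j < Nat.nth P (j + 1) := Nat.nth_strictMono hP (Nat.lt_succ_self j)
    simpa [show Nat.nth P j + 1 + (Nat.nth P (j + 1) - (Nat.nth P j + 1)) = Nat.nth P (j + 1)
      by omega] using hgap j (Nat.nth P (j + 1) - (Nat.nth P j + 1)) (by omega)
  have absorb : ∀ {r : β → β → Prop}, (∀ x y z, r x y → E y z → r x z) →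
      ∀ {x y z}, r x y → ReflTransGen E y z → r x z := by
    intro r hr x y z hxy hyz
    induction hyz with
    | refl => exact hxy
    | tail _ hE ih => exact hr _ _ _ ih hE
  refine not_not.2 ⟨fun j => c (Nat.nth P j),
    fun j => absorb h₂ (Nat.nth_mem_of_infinite hP j) (hnext j), ?_⟩
  refine ((hinf.preimage ?_).mono fun j hj => absorb h₁ hj (hnext j))
  rw [Nat.range_nth_of_infinite hP]
  exact h₁₂

theorem exists_seq_of_forall_exists {P : ℕ → β → Prop} {Q : ℕ → β → β → Prop} {b₀ : β}
    (h₀ : P 0 b₀) (h : ∀ m b, P m b → ∃ b', P (m + 1) b' ∧ Q m b b') :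
    ∃ s : ℕ → β, ∀ m, P m (s m) ∧ Q m (s m) (s (m + 1)) := by
  have h' : ∀ m b, ∃ b', P m b → P (m + 1) b' ∧ Q m b b' := fun m b => by
    by_cases hb : P m b
    · obtain ⟨b', hb'⟩ := h m b hb
      exact ⟨b', fun _ => hb'⟩
    · exact ⟨b, fun h => absurd h hb⟩
  choose next hnext using h'
  let s : ℕ → β := fun m => Nat.rec b₀ next m
  have hs : ∀ m, P m (s m) := fun m => by
    induction m with
    | zero => exact h₀
    | succ m ih => exact (hnext m _ ih).1
  exact ⟨s, fun m => ⟨hs m, (hnext m _ (hs m)).2⟩⟩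

theorem exists_infinite_fiber_of_le {s : Set β} (hs : s.Infinite) (g : β → ℕ) (N : ℕ)
    (hg : ∀ x ∈ s, g x ≤ N) : ∃ i, {x | x ∈ s ∧ g x = i}.Infinite := by
  by_contra! h
  refine hs (((Set.finite_le_nat N).biUnion fun i _ => h i).subset fun x hx => ?_)
  simp only [Set.mem_iUnion]
  exact ⟨g x, hg x hx, hx, rfl⟩

theorem infinite_setOf_add {P : ℕ → Prop} (h : {n | P n}.Infinite) (k : ℕ) :
    {m | P (k + m)}.Infinite := by
  refine Set.Infinite.of_image (k + ·) ((h.sdiff (Set.finite_Iio k)).mono ?_)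
  rintro n ⟨hn, hk⟩
  simp only [Set.mem_Iio, not_lt] at hk
  exact ⟨n - k, by simpa [Nat.add_sub_cancel' hk] using hn, Nat.add_sub_cancel' hk⟩

end Sequences

section StringRewriting

variable {β : Type*}

theorem sim_iff_isRotated {u v : List β} : Sim u v ↔ u ~r v := by
  constructor
  · rintro ⟨w₁, w₂, rfl, rfl⟩
    exact List.isRotated_append
  · intro h
    obtain ⟨n, hn, rfl⟩ := List.isRotated_iff_mod.1 h
    exact ⟨u.take n, u.drop n, (u.take_append_drop n).symm, List.rotate_eq_drop_append_take hn⟩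

theorem sim_refl (u : List β) : Sim u u := ⟨u, [], by simp, by simp⟩

theorem CycleStep.isRotated_right {T : Set (List β × List β)} {x y z : List β}
    (h : CycleStep T x y) (hyz : y ~r z) : CycleStep T x z := by
  obtain ⟨l, r, w, hT, h₁, h₂⟩ := h
  exact ⟨l, r, w, hT, h₁, sim_iff_isRotated.2 ((sim_iff_isRotated.1 h₂).trans hyz)⟩

theorem CycleStep.mono {T T' : Set (List β × List β)} (hT : T ⊆ T') {x y : List β}
    (h : CycleStep T x y) : CycleStep T' x y := by
  obtain ⟨l, r, w, hl, h₁, h₂⟩ := h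
  exact ⟨l, r, w, hT hl, h₁, h₂⟩

theorem CycleStep.exists_witness {T T' : Set (List β × List β)} (hT : T ⊆ T') {x y : List β}
    (h : CycleStep T' x y) : ∃ l r w, (l, r) ∈ T' ∧ Sim (l ++ w) x ∧ Sim (r ++ w) y ∧
      (CycleStep T x y → (l, r) ∈ T) := by
  by_cases hS : CycleStep T x y
  · obtain ⟨l, r, w, hlr, h₁, h₂⟩ := hS
    exact ⟨l, r, w, hT hlr, h₁, h₂, fun _ => hlr⟩
  · obtain ⟨l, r, w, hlr, h₁, h₂⟩ := h
    exact ⟨l, r, w, hlr, h₁, h₂, fun h => absurd h hS⟩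

theorem Step.mono {T T' : Set (List β × List β)} (hT : T ⊆ T') {x y : List β}
    (h : Step T x y) : Step T' x y := by
  obtain ⟨u, v, l, r, hl, rfl, rfl⟩ := h
  exact ⟨u, v, l, r, hT hl, rfl, rfl⟩

theorem Step.exists_witness {T T' : Set (List β × List β)} (hT : T ⊆ T') {x y : List β}
    (h : Step T' x y) : ∃ u v l r, (l, r) ∈ T' ∧ x = u ++ l ++ v ∧ y = u ++ r ++ v ∧
      (Step T x y → (l, r) ∈ T) := by
  by_cases hS : Step T x y
  · obtain ⟨u, v, l, r, hlr, rfl, rfl⟩ := hS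
    exact ⟨u, v, l, r, hT hlr, rfl, rfl, fun _ => hlr⟩
  · obtain ⟨u, v, l, r, hlr, rfl, rfl⟩ := h
    exact ⟨u, v, l, r, hlr, rfl, rfl, fun h => absurd h hS⟩

theorem Step.append {T : Set (List β × List β)} {x y : List β} (h : Step T x y)
    (u v : List β) : Step T (u ++ x ++ v) (u ++ y ++ v) := by
  obtain ⟨u', v', l, r, hl, rfl, rfl⟩ := h
  exact ⟨u ++ u', v' ++ v, l, r, hl, by simp, by simp⟩

theorem reflTransGen_step_append {T : Set (List β × List β)} {x y x' y' : List β}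
    (h : ReflTransGen (Step T) x y) (u v : List β) (hx : x' = u ++ x ++ v)
    (hy : y' = u ++ y ++ v) : ReflTransGen (Step T) x' y' := by
  subst hx hy
  induction h with
  | refl => exact .refl
  | tail _ hs ih => exact ih.tail (hs.append u v)

theorem reflTransGen_step_of_mem {T : Set (List β × List β)} {l r x' y' : List β}
    (h : (l, r) ∈ T) (u v : List β) (hx : x' = u ++ l ++ v) (hy : y' = u ++ r ++ v) :
    ReflTransGen (Step T) x' y' :=
  .single ⟨u, v, l, r, h, hx, hy⟩

theorem reflTransGen_sweep_right {γ : Type*} {T : Set (List β × List β)} {x : List β}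
    {φ ψ : γ → β} (h : ∀ a, (x ++ [φ a], ψ a :: x) ∈ T) (z : List γ) :
    ReflTransGen (Step T) (x ++ z.map φ) (z.map ψ ++ x) := by
  induction z with
  | nil => simpa using .refl
  | cons a z ih =>
    exact (reflTransGen_step_of_mem (h a) [] (z.map φ) (by simp) rfl).trans
      (reflTransGen_step_append ih [ψ a] [] (by simp) (by simp))

theorem reflTransGen_sweep_left {γ : Type*} {T : Set (List β × List β)} {x : List β}
    {φ ψ : γ → β} (h : ∀ a, (φ a :: x, x ++ [ψ a]) ∈ T) (z : List γ) :
    ReflTransGen (Step T) (z.map φ ++ x) (x ++ z.map ψ) := by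
  induction z with
  | nil => simpa using .refl
  | cons a z ih =>
    exact (reflTransGen_step_append ih [φ a] [] (by simp) rfl).trans
      (reflTransGen_step_of_mem (h a) [] (z.map ψ) (by simp) (by simp))

end StringRewriting

section RotationMachine

open RotSym

variable {α : Type*}

theorem rotA_mem : ([symB, symE], [symW, symE]) ∈ rotSRS α := by simp [rotSRS]
theorem rotB_mem (a : α) : ([symB, ca a], [symO, symC, cd a, symG]) ∈ rotSRS α := by
  simp [rotSRS]
theorem rotC_mem (a : α) : ([symG, ca a], [cd a, symG]) ∈ rotSRS α := by simp [rotSRS]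
theorem rotD_mem (a : α) : ([symG, ca a], [symL, cc a, symS]) ∈ rotSRS α := by simp [rotSRS]
theorem rotE_mem : ([symG, symE], [symF, symE]) ∈ rotSRS α := by simp [rotSRS]
theorem rotF_mem (c d : α) : ([cd d, symL, cc c], [symL, cc c, cb d]) ∈ rotSRS α := by
  simp [rotSRS]
theorem rotG_mem (c : α) : ([symC, symL, cc c], [ce c, symC, symR]) ∈ rotSRS α := by
  simp [rotSRS]
theorem rotH_mem (b : α) : ([symR, cb b], [cd b, symR]) ∈ rotSRS α := by simp [rotSRS]
theorem rotI_mem (a : α) : ([symR, symS, ca a], [symL, cc a, symS]) ∈ rotSRS α := by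
  simp [rotSRS]
theorem rotJ_mem : ([symR, symS, symE], [symF, symE]) ∈ rotSRS α := by simp [rotSRS]
theorem rotK_mem (d : α) : ([cd d, symF], [symF, ca d]) ∈ rotSRS α := by simp [rotSRS]
theorem rotL_mem : ([symC, symF], [symf]) ∈ rotSRS α := by simp [rotSRS]
theorem rotM_mem (e : α) : ([ce e, symf], [symf, ca e]) ∈ rotSRS α := by simp [rotSRS]
theorem rotN_mem : ([symO, symf], [symW]) ∈ rotSRS α := by simp [rotSRS]

local notation:50 x " ⟶* " y => ReflTransGen (Step (rotSRS _)) x y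

theorem rot_reflTransGen_F (el dl : List α) :
    (symO :: el.map ce ++ symC :: dl.map cd ++ [symF, symE]) ⟶*
      (symW :: (el ++ dl).map ca ++ [symE]) :=
  calc _ ⟶* symO :: el.map ce ++ [symC, symF] ++ dl.map ca ++ [symE] :=
        reflTransGen_step_append (reflTransGen_sweep_left rotK_mem dl)
          (symO :: el.map ce ++ [symC]) [symE] (by simp) (by simp)
    _ ⟶* symO :: el.map ce ++ symf :: dl.map ca ++ [symE] :=
        reflTransGen_step_of_mem rotL_mem (symO :: el.map ce) (dl.map ca ++ [symE])
          (by simp) (by simp)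
    _ ⟶* symO :: symf :: el.map ca ++ dl.map ca ++ [symE] :=
        reflTransGen_step_append (reflTransGen_sweep_left rotM_mem el) [symO]
          (dl.map ca ++ [symE]) (by simp) (by simp)
    _ ⟶* _ := reflTransGen_step_of_mem rotN_mem [] (el.map ca ++ dl.map ca ++ [symE])
          (by simp) (by simp)

theorem rot_reflTransGen_L (el dl : List α) (c : α) (rest : List (RotSym α)) :
    (symO :: el.map ce ++ symC :: dl.map cd ++ symL :: cc c :: symS :: rest) ⟶*
      (symO :: (el ++ [c]).map ce ++ symC :: dl.map cd ++ symR :: symS :: rest) :=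
  calc _ ⟶* symO :: el.map ce ++ symC :: symL :: cc c :: dl.map cb ++ symS :: rest :=
        reflTransGen_step_append (reflTransGen_sweep_left (rotF_mem c) dl)
          (symO :: el.map ce ++ [symC]) (symS :: rest) (by simp) (by simp)
    _ ⟶* symO :: el.map ce ++ ce c :: symC :: symR :: dl.map cb ++ symS :: rest :=
        reflTransGen_step_of_mem (rotG_mem c) (symO :: el.map ce) (dl.map cb ++ symS :: rest)
          (by simp) (by simp)
    _ ⟶* _ := reflTransGen_step_append
          (reflTransGen_sweep_right (x := [symR]) (φ := cb) (ψ := cd) rotH_mem dl)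
          (symO :: el.map ce ++ [ce c, symC]) (symS :: rest) (by simp) (by simp)

theorem rot_reflTransGen_R (rest : List α) : ∀ el dl : List α,
    (symO :: el.map ce ++ symC :: dl.map cd ++ symR :: symS :: rest.map ca ++ [symE]) ⟶*
      (symW :: (el ++ rest ++ dl).map ca ++ [symE]) := by
  induction rest with
  | nil =>
    intro el dl
    calc _ ⟶* symO :: el.map ce ++ symC :: dl.map cd ++ [symF, symE] :=
          reflTransGen_step_of_mem rotJ_mem (symO :: el.map ce ++ symC :: dl.map cd) []
            (by simp) (by simp)
      _ ⟶* _ := by simpa using rot_reflTransGen_F el dl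
  | cons a rest ih =>
    intro el dl
    calc _ ⟶* symO :: el.map ce ++ symC :: dl.map cd ++ symL :: cc a :: symS ::
            (rest.map ca ++ [symE]) :=
          reflTransGen_step_of_mem (rotI_mem a) (symO :: el.map ce ++ symC :: dl.map cd)
            (rest.map ca ++ [symE]) (by simp) (by simp)
      _ ⟶* symO :: (el ++ [a]).map ce ++ symC :: dl.map cd ++ symR :: symS ::
            (rest.map ca ++ [symE]) := rot_reflTransGen_L el dl a _
      _ ⟶* _ := by simpa using ih (el ++ [a]) dl

theorem rot_reflTransGen_G (dl w : List α) :
    (symO :: symC :: dl.map cd ++ symG :: w.map ca ++ [symE]) ⟶*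
      (symW :: (w ++ dl).map ca ++ [symE]) := by
  cases w with
  | nil =>
    calc _ ⟶* symO :: symC :: dl.map cd ++ [symF, symE] :=
          reflTransGen_step_of_mem rotE_mem (symO :: symC :: dl.map cd) [] (by simp) (by simp)
      _ ⟶* _ := by simpa using rot_reflTransGen_F [] dl
  | cons a w =>
    calc _ ⟶* symO :: symC :: dl.map cd ++ symL :: cc a :: symS :: (w.map ca ++ [symE]) :=
          reflTransGen_step_of_mem (rotD_mem a) (symO :: symC :: dl.map cd)
            (w.map ca ++ [symE]) (by simp) (by simp)
      _ ⟶* symO :: [a].map ce ++ symC :: dl.map cd ++ symR :: symS :: (w.map ca ++ [symE]) :=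
          by simpa using rot_reflTransGen_L [] dl a (w.map ca ++ [symE])
      _ ⟶* _ := by simpa using rot_reflTransGen_R w [a] dl

theorem rot_reflTransGen_of_sim {x y : List α} (h : Sim x y) :
    (symB :: x.map ca ++ [symE]) ⟶* (symW :: y.map ca ++ [symE]) := by
  obtain ⟨w₁, w₂, rfl, rfl⟩ := h
  suffices h : ∀ a w₁ w₂, (symB :: (a :: w₁ ++ w₂).map ca ++ [symE]) ⟶*
      (symW :: (w₂ ++ a :: w₁).map ca ++ [symE]) by
    rcases w₁ with _ | ⟨a, w₁⟩
    · rcases w₂ with _ | ⟨a, w₂⟩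
      · exact reflTransGen_step_of_mem rotA_mem [] [] rfl rfl
      · simpa using h a w₂ []
    · exact h a w₁ w₂
  intro a w₁ w₂
  calc _ ⟶* symO :: symC :: cd a :: symG :: (w₁ ++ w₂).map ca ++ [symE] :=
        reflTransGen_step_of_mem (rotB_mem a) [] ((w₁ ++ w₂).map ca ++ [symE])
          (by simp) (by simp)
    _ ⟶* symO :: symC :: (a :: w₁).map cd ++ symG :: w₂.map ca ++ [symE] :=
        reflTransGen_step_append
          (reflTransGen_sweep_right (x := [symG]) (φ := ca) (ψ := cd) rotC_mem w₁)
          [symO, symC, cd a] (w₂.map ca ++ [symE]) (by simp) (by simp)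
    _ ⟶* _ := rot_reflTransGen_G (a :: w₁) w₂

end RotationMachine

section Soundness

open RotSym

variable {α : Type*}

/-- `liftRules S` is the system `S'` of `rotate_rel(S, R)`. -/
def liftRules (S : Set (List α × List α)) : Set (List (RotSym α) × List (RotSym α)) :=
  { p | ∃ l r, (l, r) ∈ S ∧ p = (symW :: l.map ca, symB :: r.map ca) }

theorem liftRules_subset_rotateSRS {S R : Set (List α × List α)} (hSR : S ⊆ R) :
    liftRules S ⊆ rotateSRS R := fun _ ⟨l, r, h, hlr⟩ => Or.inr ⟨l, r, hSR h, hlr⟩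

theorem step_liftRules {T : Set (List α × List α)} {l r : List α} (h : (l, r) ∈ T)
    (w : List α) :
    Step (liftRules T) (symW :: (l ++ w).map ca ++ [symE]) (symB :: (r ++ w).map ca ++ [symE]) :=
  ⟨[], w.map ca ++ [symE], _, _, ⟨l, r, h, rfl⟩, by simp, by simp⟩

theorem not_relTerminating_liftRules_of_cycleStep {S R : Set (List α × List α)} (hSR : S ⊆ R)
    (h : ¬ RelTerminating (CycleStep S) (CycleStep R)) :
    ¬ RelTerminating (Step (liftRules S)) (Step (rotateSRS R)) := by
  obtain ⟨f, hstep, hinf⟩ := not_not.1 h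
  choose l r w hR hsim₁ hsim₂ hS using fun n => (hstep n).exists_witness hSR
  refine not_relTerminating_of_reflTransGen
    (fun n => symW :: (l n ++ w n).map ca ++ [symE])
    (fun n => symB :: (r n ++ w n).map ca ++ [symE])
    (fun n => (step_liftRules (hR n) _).mono Set.subset_union_right) (fun n => ?_)
    (hinf.mono fun n hn => step_liftRules (hS n hn) _)
  have hrot : Sim (r n ++ w n) (l (n + 1) ++ w (n + 1)) :=
    sim_iff_isRotated.2 ((sim_iff_isRotated.1 (hsim₂ n)).trans
      (sim_iff_isRotated.1 (hsim₁ (n + 1))).symm)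
  exact ReflTransGen.mono (fun _ _ => Step.mono Set.subset_union_left) _ _
    (rot_reflTransGen_of_sim hrot)

end Soundness

section Blocks

open RotSym

variable {α : Type*}

/-- Every rule of `rotate R` has exactly one state symbol on each side. -/
def IsState : RotSym α → Bool
  | symB | symW | symG | symL | symR | symF | symf => true
  | _ => false

def stateCount (t : List (RotSym α)) : ℕ := t.countP IsState

@[simp] theorem stateCount_nil : stateCount ([] : List (RotSym α)) = 0 := rfl

@[simp] theorem stateCount_append (s t : List (RotSym α)) :
    stateCount (s ++ t) = stateCount s + stateCount t :=
  List.countP_append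

@[simp] theorem stateCount_cons (x : RotSym α) (t : List (RotSym α)) :
    stateCount (x :: t) = stateCount t + if IsState x then 1 else 0 := by
  simp [stateCount, List.countP_cons]

@[simp] theorem stateCount_map_ca (l : List α) : stateCount (l.map ca) = 0 := by
  simp [stateCount, List.countP_eq_zero, IsState]

@[simp] theorem stateCount_map_cb (l : List α) : stateCount (l.map cb) = 0 := by
  simp [stateCount, List.countP_eq_zero, IsState]

@[simp] theorem stateCount_map_cd (l : List α) : stateCount (l.map cd) = 0 := by
  simp [stateCount, List.countP_eq_zero, IsState]

@[simp] theorem stateCount_map_ce (l : List α) : stateCount (l.map ce) = 0 := by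
  simp [stateCount, List.countP_eq_zero, IsState]

def IsBlockStart (x : RotSym α) : Prop := x = symO ∨ x = symW ∨ x = symB

def CanEndBlock : RotSym α → Bool
  | ca _ => true
  | symS => true
  | x => IsState x

theorem isState_eq_false_of_canEndBlock {x : RotSym α} (h : CanEndBlock x = false) :
    IsState x = false := by
  cases x <;> simp_all [CanEndBlock, IsState]

def HeadNotA (q : List (RotSym α)) : Prop := ∀ a, q.head? ≠ some (ca a)

theorem HeadNotA.append {r : List (RotSym α)} (hr : HeadNotA r) (hne : r ≠ [])
    (v : List (RotSym α)) : HeadNotA (r ++ v) := by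
  simpa [HeadNotA, List.head?_append_of_ne_nil _ hne] using hr

/-- The shapes of the region of a string governed by one state symbol in a run of `rotate R`.
`L el dl c bl al` spells `O el^E C dl^D L c^C bl^B S al^A` and encodes the cycle
`bl el c al dl`; the other shapes are the snapshots of the rotation machine likewise. -/
inductive Block (α : Type*) where
  | W (al : List α)
  | B (al : List α)
  | G (dl al : List α)
  | L (el dl : List α) (c : α) (bl al : List α)
  | R (el dl bl al : List α)
  | F (el dl al : List α)
  | f (el al : List α)

namespace Block

@[simp] def left : Block α → List (RotSym α)
  | W _ => []
  | B _ => []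
  | G dl _ => symO :: symC :: dl.map cd
  | L el dl _ _ _ => symO :: el.map ce ++ symC :: dl.map cd
  | R el dl _ _ => symO :: el.map ce ++ symC :: dl.map cd
  | F el dl _ => symO :: el.map ce ++ symC :: dl.map cd
  | f el _ => symO :: el.map ce

@[simp] def state : Block α → RotSym α
  | W _ => symW
  | B _ => symB
  | G _ _ => symG
  | L _ _ _ _ _ => symL
  | R _ _ _ _ => symR
  | F _ _ _ => symF
  | f _ _ => symf

@[simp] def right : Block α → List (RotSym α)
  | W al => al.map ca
  | B al => al.map ca
  | G _ al => al.map ca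
  | L _ _ c bl al => cc c :: bl.map cb ++ symS :: al.map ca
  | R _ _ bl al => bl.map cb ++ symS :: al.map ca
  | F _ _ al => al.map ca
  | f _ al => al.map ca

def toWord (b : Block α) : List (RotSym α) := b.left ++ b.state :: b.right

@[simp] def cycle : Block α → List α
  | W al => al
  | B al => al
  | G dl al => dl ++ al
  | L el dl c bl al => bl ++ el ++ c :: al ++ dl
  | R el dl bl al => bl ++ el ++ al ++ dl
  | F el dl al => el ++ dl ++ al
  | f el al => el ++ al

@[simp] theorem stateCount_left (b : Block α) : stateCount b.left = 0 := by
  cases b <;> simp [left, IsState]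

@[simp] theorem isState_state (b : Block α) : IsState b.state = true := by
  cases b <;> rfl

@[simp] theorem stateCount_toWord (b : Block α) : stateCount b.toWord = 1 := by
  cases b <;> simp [toWord, left, right, state, IsState]

theorem toWord_eq_cons (b : Block α) : ∃ x t, b.toWord = x :: t ∧ IsBlockStart x := by
  cases b <;> exact ⟨_, _, rfl, by simp [IsBlockStart]⟩

theorem canEndBlock_last (b : Block α) {x : RotSym α} {w : List (RotSym α)}
    (h : b.toWord = w ++ [x]) : CanEndBlock x = true := by
  have hlast := congrArg List.getLast? h
  simp only [List.getLast?_append, List.getLast?_singleton, Option.some_or] at hlast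
  cases b <;> simp [toWord, left, state, right, List.getLast?_append, List.getLast?_cons] at hlast
  all_goals subst hlast; cases List.getLast? _ <;> rfl

end Block

def BlockAt (t : List (RotSym α)) (i : ℕ) (b : Block α) : Prop :=
  ∃ p q, t = p ++ b.toWord ++ q ∧ stateCount p = i ∧ HeadNotA q

theorem blockAt_of_eq {t p q : List (RotSym α)} {b : Block α} (h : t = p ++ b.toWord ++ q)
    (hq : HeadNotA q) : BlockAt t (stateCount p) b :=
  ⟨p, q, h, rfl, hq⟩

end Blocks

section Locality

open RotSym

variable {α : Type*}

theorem blockAt_of_stateCount_lt {l r u v p q : List (RotSym α)} {b : Block α}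
    (hlr : stateCount l = stateCount r) (htail : ∀ z ∈ l.tail, ¬ IsBlockStart z)
    (heq : u ++ l ++ v = p ++ b.toWord ++ q) (hq : HeadNotA q)
    (hlt : stateCount u < stateCount p) : BlockAt (u ++ r ++ v) (stateCount p) b := by
  simp only [List.append_assoc] at heq
  rcases List.append_eq_append_iff.1 heq with ⟨w, rfl, hlv⟩ | ⟨w, rfl, -⟩
  · rcases List.append_eq_append_iff.1 hlv with ⟨w', rfl, rfl⟩ | ⟨_ | ⟨z, w'⟩, rfl, hbq⟩
    · exact ⟨u ++ r ++ w', q, by simp, by simp [hlr], hq⟩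
    · exact ⟨u ++ r, q, by simp [hbq], by simpa using hlr.symm, hq⟩
    · -- the block would start inside the tail of the redex
      exfalso
      obtain ⟨x, t, hxt, hx⟩ := b.toWord_eq_cons
      obtain rfl : x = z := by simpa [hxt] using congrArg List.head? hbq
      obtain ⟨y, w, rfl⟩ := List.exists_cons_of_ne_nil (show w ≠ [] by rintro rfl; simp at hlt)
      exact htail x (by simp) hx
  · simp at hlt

theorem blockAt_of_stateCount_gt {lx ly r u v p q : List (RotSym α)} {X : RotSym α}
    {b : Block α} (hX : IsState X) (hlx : lx.length ≤ 1) (hlx' : ∀ x ∈ lx, CanEndBlock x = false)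
    (hr : r ≠ []) (hr' : HeadNotA r) (heq : u ++ (lx ++ X :: ly) ++ v = p ++ b.toWord ++ q)
    (hq : HeadNotA q) (hgt : stateCount p < stateCount u) :
    BlockAt (u ++ r ++ v) (stateCount p) b := by
  simp only [List.append_assoc] at heq
  rcases List.append_eq_append_iff.1 heq with ⟨w, rfl, -⟩ | ⟨w, rfl, hbq⟩
  · simp at hgt
  · rcases List.append_eq_append_iff.1 hbq with ⟨w', rfl, rfl⟩ | ⟨w', hb, hlv⟩
    · refine ⟨p, w' ++ r ++ v, by simp, rfl, ?_⟩
      rcases w' with _ | ⟨y, w'⟩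
      · simpa using hr'.append hr v
      · simpa [HeadNotA] using hq
    · rcases w' with _ | ⟨y, w'⟩
      · exact ⟨p, r ++ v, by simp [hb], rfl, hr'.append hr v⟩
      -- the redex would start inside the block, after its state symbol: then `lx` is the
      -- block's last letter
      exfalso
      have hw' : stateCount (y :: w') = 0 := by
        have h₁ := b.stateCount_toWord
        simp only [hb, stateCount_append] at h₁ hgt
        omega
      match lx, hlx, hlx' with
      | [], _, _ =>
        obtain ⟨rfl, -⟩ : X = y ∧ _ := by simpa using hlv
        simp [hX] at hw'
      | [x], _, hx =>
        obtain ⟨rfl, hlv⟩ : x = y ∧ _ := by simpa using hlv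
        rcases w' with _ | ⟨z, w'⟩
        · simp [Block.canEndBlock_last b (x := x) (w := w) hb] at hx
        · obtain ⟨rfl, -⟩ : X = z ∧ _ := by simpa using hlv
          simp [hX] at hw'

theorem eq_of_append_cons_eq {a b c d : List (RotSym α)} {X Y : RotSym α}
    (h : a ++ X :: b = c ++ Y :: d) (hac : stateCount a = stateCount c) (hX : IsState X)
    (hY : IsState Y) : a = c ∧ X = Y ∧ b = d := by
  rcases List.append_eq_append_iff.1 h with ⟨_ | ⟨z, w⟩, rfl, hw⟩ | ⟨_ | ⟨z, w⟩, rfl, hw⟩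
  · simpa [eq_comm] using hw
  · obtain ⟨rfl, -⟩ : X = z ∧ _ := by simpa using hw
    simp [hX] at hac
  · simpa [eq_comm] using hw
  · obtain ⟨rfl, -⟩ : Y = z ∧ _ := by simpa using hw
    simp [hY] at hac

theorem eq_of_stateCount_eq {lx ly u v p q : List (RotSym α)} {X : RotSym α} {b : Block α}
    (hX : IsState X) (hlx : stateCount lx = 0)
    (heq : u ++ (lx ++ X :: ly) ++ v = p ++ b.toWord ++ q) (h : stateCount u = stateCount p) :
    u ++ lx = p ++ b.left ∧ X = b.state ∧ ly ++ v = b.right ++ q :=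
  eq_of_append_cons_eq (by simpa [Block.toWord] using heq)
    (by simp only [stateCount_append, h, hlx, Block.stateCount_left]) hX b.isState_state

end Locality

section AlignedSteps

open RotSym

variable {α : Type*}

def RotatesBlocks (lx : List (RotSym α)) (X : RotSym α) (ly r : List (RotSym α)) : Prop :=
  ∀ (u v p q : List (RotSym α)) (b : Block α), u ++ lx = p ++ b.left → X = b.state →
    ly ++ v = b.right ++ q → HeadNotA q →
    ∃ b', BlockAt (u ++ r ++ v) (stateCount p) b' ∧ b.cycle ~r b'.cycle

theorem map_ca_append_eq_ca_cons {al : List α} {q v : List (RotSym α)} {a : α}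
    (h : ca a :: v = al.map ca ++ q) (hq : HeadNotA q) :
    ∃ al', al = a :: al' ∧ v = al'.map ca ++ q := by
  rcases al with _ | ⟨a', al'⟩
  · simp only [List.map_nil, List.nil_append] at h
    exact (hq a (by simp [← h])).elim
  · obtain ⟨rfl, rfl⟩ : a = a' ∧ v = al'.map ca ++ q := by simpa using h
    exact ⟨al', rfl, rfl⟩

theorem map_ca_append_eq_cons {al : List α} {q v : List (RotSym α)} {x : RotSym α}
    (hx : ∀ a, x ≠ ca a) (h : x :: v = al.map ca ++ q) : al = [] ∧ q = x :: v := by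
  rcases al with _ | ⟨a, al⟩
  · simpa using h.symm
  · exact absurd (List.cons.inj h).1 (hx a)

theorem rotatesBlocks_rotA : RotatesBlocks (α := α) [] symB [symE] [symW, symE] := by
  intro u v p q b hu hX hv hq
  cases b <;> simp only [Block.state, reduceCtorEq] at hX
  case B al =>
  simp only [Block.left, Block.right, List.append_nil, List.singleton_append] at hu hv
  obtain ⟨rfl, rfl⟩ := map_ca_append_eq_cons (x := symE) (by simp) hv
  exact ⟨.W [], blockAt_of_eq (by simp [hu, Block.toWord]) hq, by simp [List.IsRotated.refl]⟩

theorem rotatesBlocks_rotB (a : α) : RotatesBlocks [] symB [ca a] [symO, symC, cd a, symG] := by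
  intro u v p q b hu hX hv hq
  cases b <;> simp only [Block.state, reduceCtorEq] at hX
  case B al =>
  simp only [Block.left, Block.right, List.append_nil, List.singleton_append] at hu hv
  obtain ⟨al, rfl, rfl⟩ := map_ca_append_eq_ca_cons hv hq
  exact ⟨.G [a] al, blockAt_of_eq (by simp [hu, Block.toWord]) hq, by simp [List.IsRotated.refl]⟩

theorem rotatesBlocks_rotC (a : α) : RotatesBlocks [] symG [ca a] [cd a, symG] := by
  intro u v p q b hu hX hv hq
  cases b <;> simp only [Block.state, reduceCtorEq] at hX
  case G dl al =>
  simp only [Block.left, Block.right, List.append_nil, List.singleton_append] at hu hv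
  obtain ⟨al, rfl, rfl⟩ := map_ca_append_eq_ca_cons hv hq
  exact ⟨.G (dl ++ [a]) al, blockAt_of_eq (by simp [hu, Block.toWord]) hq,
    by simp [List.IsRotated.refl]⟩

theorem rotatesBlocks_rotD (a : α) : RotatesBlocks [] symG [ca a] [symL, cc a, symS] := by
  intro u v p q b hu hX hv hq
  cases b <;> simp only [Block.state, reduceCtorEq] at hX
  case G dl al =>
  simp only [Block.left, Block.right, List.append_nil, List.singleton_append] at hu hv
  obtain ⟨al, rfl, rfl⟩ := map_ca_append_eq_ca_cons hv hq
  exact ⟨.L [] dl a [] al, blockAt_of_eq (by simp [hu, Block.toWord]) hq,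
    by simpa using List.isRotated_append (l := dl) (l' := a :: al)⟩

theorem rotatesBlocks_rotE : RotatesBlocks (α := α) [] symG [symE] [symF, symE] := by
  intro u v p q b hu hX hv hq
  cases b <;> simp only [Block.state, reduceCtorEq] at hX
  case G dl al =>
  simp only [Block.left, Block.right, List.append_nil, List.singleton_append] at hu hv
  obtain ⟨rfl, rfl⟩ := map_ca_append_eq_cons (x := symE) (by simp) hv
  exact ⟨.F [] dl [], blockAt_of_eq (by simp [hu, Block.toWord]) hq,
    by simp [List.IsRotated.refl]⟩

theorem rotatesBlocks_rotF (c d : α) : RotatesBlocks [cd d] symL [cc c] [symL, cc c, cb d] := by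
  intro u v p q b hu hX hv hq
  cases b <;> simp only [Block.state, reduceCtorEq] at hX
  case L el dl c' bl al =>
  simp only [Block.left] at hu
  obtain ⟨rfl, rfl⟩ : c = c' ∧ v = _ := by simpa using hv
  rcases dl.eq_nil_or_concat with rfl | ⟨dl, d', rfl⟩
  · simpa using congrArg List.reverse hu
  obtain ⟨rfl, rfl⟩ : d = d' ∧ _ := by simpa using congrArg List.reverse hu
  refine ⟨.L el dl c (d :: bl) al, blockAt_of_eq (by simp [Block.toWord]) hq, ?_⟩
  simpa using List.isRotated_append (l := bl ++ el ++ c :: al ++ dl) (l' := [d])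

theorem rotatesBlocks_rotG (c : α) : RotatesBlocks [symC] symL [cc c] [ce c, symC, symR] := by
  intro u v p q b hu hX hv hq
  cases b <;> simp only [Block.state, reduceCtorEq] at hX
  case L el dl c' bl al =>
  simp only [Block.left] at hu
  obtain ⟨rfl, rfl⟩ : c = c' ∧ v = _ := by simpa using hv
  rcases dl.eq_nil_or_concat with rfl | ⟨dl, d, rfl⟩
  · obtain rfl : u = p ++ symO :: el.map ce := by simpa using congrArg List.reverse hu
    exact ⟨.R (el ++ [c]) [] bl al, blockAt_of_eq (by simp [Block.toWord]) hq,
      by simp [List.IsRotated.refl]⟩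
  · simpa using congrArg List.reverse hu

theorem rotatesBlocks_rotH (b₀ : α) : RotatesBlocks [] symR [cb b₀] [cd b₀, symR] := by
  intro u v p q b hu hX hv hq
  cases b <;> simp only [Block.state, reduceCtorEq] at hX
  case R el dl bl al =>
  simp only [Block.left, List.append_nil] at hu
  rcases bl with _ | ⟨b₁, bl⟩
  · simp at hv
  obtain ⟨rfl, rfl⟩ : b₀ = b₁ ∧ v = bl.map cb ++ symS :: al.map ca ++ q := by simpa using hv
  exact ⟨.R el (dl ++ [b₀]) bl al, blockAt_of_eq (by simp [hu, Block.toWord]) hq,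
    by simpa using List.isRotated_append (l := [b₀]) (l' := bl ++ el ++ al ++ dl)⟩

theorem rotatesBlocks_rotI (a : α) : RotatesBlocks [] symR [symS, ca a] [symL, cc a, symS] := by
  intro u v p q b hu hX hv hq
  cases b <;> simp only [Block.state, reduceCtorEq] at hX
  case R el dl bl al =>
  simp only [Block.left, List.append_nil] at hu
  rcases bl with _ | ⟨b₁, bl⟩
  · obtain ⟨al, rfl, rfl⟩ := map_ca_append_eq_ca_cons (by simpa using hv) hq
    exact ⟨.L el dl a [] al, blockAt_of_eq (by simp [hu, Block.toWord]) hq,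
      by simp [List.IsRotated.refl]⟩
  · simp at hv

theorem rotatesBlocks_rotJ : RotatesBlocks (α := α) [] symR [symS, symE] [symF, symE] := by
  intro u v p q b hu hX hv hq
  cases b <;> simp only [Block.state, reduceCtorEq] at hX
  case R el dl bl al =>
  simp only [Block.left, List.append_nil] at hu
  rcases bl with _ | ⟨b₁, bl⟩
  · obtain ⟨rfl, rfl⟩ := map_ca_append_eq_cons (x := symE) (by simp) (by simpa using hv)
    exact ⟨.F el dl [], blockAt_of_eq (by simp [hu, Block.toWord]) hq,
      by simp [List.IsRotated.refl]⟩
  · simp at hv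

theorem rotatesBlocks_rotK (d : α) : RotatesBlocks [cd d] symF [] [symF, ca d] := by
  intro u v p q b hu hX hv hq
  cases b <;> simp only [Block.state, reduceCtorEq] at hX
  case F el dl al =>
  simp only [Block.left] at hu
  simp only [Block.right, List.nil_append] at hv
  subst hv
  rcases dl.eq_nil_or_concat with rfl | ⟨dl, d', rfl⟩
  · simpa using congrArg List.reverse hu
  obtain ⟨rfl, rfl⟩ : d = d' ∧ _ := by simpa using congrArg List.reverse hu
  exact ⟨.F el dl (d :: al), blockAt_of_eq (by simp [Block.toWord]) hq,
    by simp [List.IsRotated.refl]⟩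

theorem rotatesBlocks_rotL : RotatesBlocks (α := α) [symC] symF [] [symf] := by
  intro u v p q b hu hX hv hq
  cases b <;> simp only [Block.state, reduceCtorEq] at hX
  case F el dl al =>
  simp only [Block.left] at hu
  simp only [Block.right, List.nil_append] at hv
  subst hv
  rcases dl.eq_nil_or_concat with rfl | ⟨dl, d, rfl⟩
  · obtain rfl : u = p ++ symO :: el.map ce := by simpa using congrArg List.reverse hu
    exact ⟨.f el al, blockAt_of_eq (by simp [Block.toWord]) hq, by simp [List.IsRotated.refl]⟩
  · simpa using congrArg List.reverse hu

theorem rotatesBlocks_rotM (e : α) : RotatesBlocks [ce e] symf [] [symf, ca e] := by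
  intro u v p q b hu hX hv hq
  cases b <;> simp only [Block.state, reduceCtorEq] at hX
  case f el al =>
  simp only [Block.left] at hu
  simp only [Block.right, List.nil_append] at hv
  subst hv
  rcases el.eq_nil_or_concat with rfl | ⟨el, e', rfl⟩
  · simpa using congrArg List.reverse hu
  obtain ⟨rfl, rfl⟩ : e = e' ∧ _ := by simpa using congrArg List.reverse hu
  exact ⟨.f el (e :: al), blockAt_of_eq (by simp [Block.toWord]) hq,
    by simp [List.IsRotated.refl]⟩

theorem rotatesBlocks_rotN : RotatesBlocks (α := α) [symO] symf [] [symW] := by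
  intro u v p q b hu hX hv hq
  cases b <;> simp only [Block.state, reduceCtorEq] at hX
  case f el al =>
  simp only [Block.left] at hu
  simp only [Block.right, List.nil_append] at hv
  subst hv
  rcases el.eq_nil_or_concat with rfl | ⟨el, e, rfl⟩
  · obtain rfl : u = p := by simpa using hu
    exact ⟨.W al, blockAt_of_eq (by simp [Block.toWord]) hq, by simp [List.IsRotated.refl]⟩
  · simpa using congrArg List.reverse hu

theorem map_ca_append_eq_map_ca_append {l al : List α} {v q : List (RotSym α)}
    (h : l.map ca ++ v = al.map ca ++ q) (hq : HeadNotA q) :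
    ∃ w, al = l ++ w ∧ v = w.map ca ++ q := by
  induction l generalizing al with
  | nil => exact ⟨al, rfl, h⟩
  | cons a l ih =>
    obtain ⟨al, rfl, h'⟩ := map_ca_append_eq_ca_cons (by simpa using h) hq
    obtain ⟨w, rfl, rfl⟩ := ih h'
    exact ⟨w, rfl, rfl⟩

theorem blockAt_liftRule {l r : List α} {u v p q : List (RotSym α)} {b : Block α}
    (hu : u = p ++ b.left) (hX : symW = b.state) (hv : l.map ca ++ v = b.right ++ q)
    (hq : HeadNotA q) :
    ∃ w, b.cycle = l ++ w ∧
      BlockAt (u ++ (symB :: r.map ca) ++ v) (stateCount p) (.B (r ++ w)) := by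
  cases b <;> simp only [Block.state, reduceCtorEq] at hX
  case W al =>
  simp only [Block.left, List.append_nil] at hu
  obtain ⟨w, rfl, rfl⟩ := map_ca_append_eq_map_ca_append hv hq
  exact ⟨w, rfl, blockAt_of_eq (by simp [hu, Block.toWord]) hq⟩

end AlignedSteps

section Completeness

open RotSym

variable {α : Type*}

/-- Confines a rewrite with the rule `lx X ly → r` to the block of its state symbol `X`. -/
structure RuleShape (lx : List (RotSym α)) (X : RotSym α) (ly r : List (RotSym α)) : Prop where
  isState : IsState X
  length_le : lx.length ≤ 1
  not_canEndBlock : ∀ x ∈ lx, CanEndBlock x = false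
  stateCount_right : stateCount ly = 0
  not_isBlockStart : ∀ z ∈ (lx ++ X :: ly).tail, ¬ IsBlockStart z
  stateCount_rhs : stateCount r = 1
  rhs_ne_nil : r ≠ []
  headNotA_rhs : HeadNotA r

namespace RuleShape

variable {lx ly r : List (RotSym α)} {X : RotSym α}

theorem stateCount_left (h : RuleShape lx X ly r) : stateCount lx = 0 :=
  List.countP_eq_zero.2 fun x hx => by
    simp [isState_eq_false_of_canEndBlock (h.not_canEndBlock x hx)]

theorem blockAt_of_stateCount_ne (h : RuleShape lx X ly r) {u v p q : List (RotSym α)}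
    {b : Block α} (heq : u ++ (lx ++ X :: ly) ++ v = p ++ b.toWord ++ q) (hq : HeadNotA q)
    (hne : stateCount u ≠ stateCount p) : BlockAt (u ++ r ++ v) (stateCount p) b := by
  rcases Nat.lt_or_gt_of_ne hne with hlt | hgt
  · exact blockAt_of_stateCount_lt
      (by simp [h.stateCount_left, h.isState, h.stateCount_right, h.stateCount_rhs])
      h.not_isBlockStart heq hq hlt
  · exact blockAt_of_stateCount_gt h.isState h.length_le h.not_canEndBlock h.rhs_ne_nil
      h.headNotA_rhs heq hq hgt

end RuleShape

theorem rotSRS_cases {l r : List (RotSym α)} (h : (l, r) ∈ rotSRS α) :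
    ∃ lx X ly, RotatesBlocks lx X ly r ∧ l = lx ++ X :: ly ∧ RuleShape lx X ly r := by
  rcases h with h | ⟨a, h⟩ | ⟨a, h⟩ | ⟨a, h⟩ | h | ⟨c, d, h⟩ | ⟨c, h⟩ | ⟨b, h⟩ | ⟨a, h⟩ | h |
    ⟨d, h⟩ | h | ⟨e, h⟩ | h <;> obtain ⟨rfl, rfl⟩ := Prod.mk.inj h <;>
    [refine ⟨_, _, _, rotatesBlocks_rotA, rfl, ?_⟩;
     refine ⟨_, _, _, rotatesBlocks_rotB a, rfl, ?_⟩;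
     refine ⟨_, _, _, rotatesBlocks_rotC a, rfl, ?_⟩;
     refine ⟨_, _, _, rotatesBlocks_rotD a, rfl, ?_⟩;
     refine ⟨_, _, _, rotatesBlocks_rotE, rfl, ?_⟩;
     refine ⟨_, _, _, rotatesBlocks_rotF c d, rfl, ?_⟩;
     refine ⟨_, _, _, rotatesBlocks_rotG c, rfl, ?_⟩;
     refine ⟨_, _, _, rotatesBlocks_rotH b, rfl, ?_⟩;
     refine ⟨_, _, _, rotatesBlocks_rotI a, rfl, ?_⟩;
     refine ⟨_, _, _, rotatesBlocks_rotJ, rfl, ?_⟩;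
     refine ⟨_, _, _, rotatesBlocks_rotK d, rfl, ?_⟩;
     refine ⟨_, _, _, rotatesBlocks_rotL, rfl, ?_⟩;
     refine ⟨_, _, _, rotatesBlocks_rotM e, rfl, ?_⟩;
     refine ⟨_, _, _, rotatesBlocks_rotN, rfl, ?_⟩]
  all_goals constructor <;> simp [IsState, IsBlockStart, HeadNotA, CanEndBlock]

theorem mem_liftRules_iff {T : Set (List α × List α)} {l r : List α} :
    (symW :: l.map ca, symB :: r.map ca) ∈ liftRules T ↔ (l, r) ∈ T := by
  have hinj : Function.Injective (List.map (ca : α → RotSym α)) :=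
    List.map_injective_iff.2 fun _ _ h => by injection h
  constructor
  · rintro ⟨l', r', h, hlr⟩
    simp only [Prod.mk.injEq, List.cons.injEq, true_and] at hlr
    rwa [hinj hlr.1, hinj hlr.2]
  · exact fun h => ⟨l, r, h, rfl⟩

theorem not_mem_liftRules_of_mem_rotSRS {T : Set (List α × List α)} {l r : List (RotSym α)}
    (h : (l, r) ∈ rotSRS α) : (l, r) ∉ liftRules T := by
  rintro ⟨l₀, r₀, -, hlr⟩
  simp [rotSRS, hlr] at h

theorem ruleShape_of_mem_rotateSRS {R : Set (List α × List α)} {l r : List (RotSym α)}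
    (h : (l, r) ∈ rotateSRS R) : ∃ lx X ly, l = lx ++ X :: ly ∧ RuleShape lx X ly r := by
  rcases h with h | ⟨l₀, r₀, -, h⟩
  · obtain ⟨lx, X, ly, -, rfl, hs⟩ := rotSRS_cases h
    exact ⟨lx, X, ly, rfl, hs⟩
  · obtain ⟨rfl, rfl⟩ := Prod.mk.inj h
    refine ⟨[], symW, l₀.map ca, rfl, ?_⟩
    constructor <;> simp [IsState, IsBlockStart, HeadNotA]

theorem Step.stateCount_eq {R : Set (List α × List α)} {x y : List (RotSym α)}
    (h : Step (rotateSRS R) x y) : stateCount y = stateCount x := by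
  obtain ⟨u, v, l, r, hlr, rfl, rfl⟩ := h
  obtain ⟨lx, X, ly, rfl, hs⟩ := ruleShape_of_mem_rotateSRS hlr
  simp [hs.stateCount_rhs, hs.stateCount_left, hs.isState, hs.stateCount_right, add_comm]

theorem exists_blockAt_step {R : Set (List α × List α)} {l r u v p q : List (RotSym α)}
    {b : Block α} (hlr : (l, r) ∈ rotateSRS R) (heq : u ++ l ++ v = p ++ b.toWord ++ q)
    (hq : HeadNotA q) :
    ∃ b', BlockAt (u ++ r ++ v) (stateCount p) b' ∧
      (b.cycle ~r b'.cycle ∨ CycleStep R b.cycle b'.cycle) ∧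
      ∀ T, stateCount u = stateCount p → (l, r) ∈ liftRules T → CycleStep T b.cycle b'.cycle := by
  by_cases hi : stateCount u = stateCount p
  swap
  · obtain ⟨lx, X, ly, rfl, hs⟩ := ruleShape_of_mem_rotateSRS hlr
    exact ⟨b, hs.blockAt_of_stateCount_ne heq hq hi, Or.inl (.refl _), fun _ h => absurd h hi⟩
  rcases hlr with hrot | ⟨l₀, r₀, hR, hlr⟩
  · obtain ⟨lx, X, ly, hrb, rfl, hs⟩ := rotSRS_cases hrot
    obtain ⟨hu, hX, hv⟩ := eq_of_stateCount_eq hs.isState hs.stateCount_left heq hi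
    obtain ⟨b', hb', hcyc⟩ := hrb u v p q b hu hX hv hq
    exact ⟨b', hb', Or.inl hcyc, fun _ _ h => absurd h (not_mem_liftRules_of_mem_rotSRS hrot)⟩
  · obtain ⟨rfl, rfl⟩ := Prod.mk.inj hlr
    obtain ⟨hu, hX, hv⟩ := eq_of_stateCount_eq (lx := []) rfl rfl heq hi
    obtain ⟨w, hw, hb'⟩ := blockAt_liftRule (r := r₀) (by simpa using hu) hX hv hq
    have hcyc : ∀ T, (l₀, r₀) ∈ T → CycleStep T b.cycle (Block.B (r₀ ++ w)).cycle :=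
      fun T h => ⟨l₀, r₀, w, h, by rw [hw]; exact sim_refl _, sim_refl _⟩
    exact ⟨_, hb', Or.inr (hcyc R hR), fun T _ h => hcyc T (mem_liftRules_iff.1 h)⟩

theorem exists_map_ca_append (v : List (RotSym α)) :
    ∃ (al : List α) (q : List (RotSym α)), v = al.map ca ++ q ∧ HeadNotA q := by
  induction v with
  | nil => exact ⟨[], [], rfl, by simp [HeadNotA]⟩
  | cons x v ih =>
    by_cases hx : ∃ a, x = ca a
    · obtain ⟨a, rfl⟩ := hx
      obtain ⟨al, q, rfl, hq⟩ := ih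
      exact ⟨a :: al, q, rfl, hq⟩
    · exact ⟨[], x :: v, rfl, fun a h => hx ⟨a, by simpa using h⟩⟩

theorem exists_blockAt_W (u v : List (RotSym α)) :
    ∃ b, BlockAt (u ++ symW :: v) (stateCount u) b := by
  obtain ⟨al, q, rfl, hq⟩ := exists_map_ca_append v
  exact ⟨.W al, blockAt_of_eq (by simp [Block.toWord]) hq⟩

theorem not_relTerminating_cycleStep_of_liftRules {S R : Set (List α × List α)} (hSR : S ⊆ R)
    (h : ¬ RelTerminating (Step (liftRules S)) (Step (rotateSRS R))) :
    ¬ RelTerminating (CycleStep S) (CycleStep R) := by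
  obtain ⟨f, hstep, hinf⟩ := not_not.1 h
  choose u v l r hlr hfu hfv hS using
    fun n => (hstep n).exists_witness (liftRules_subset_rotateSRS hSR)
  have hcount : ∀ n, stateCount (f n) = stateCount (f 0) := fun n => by
    induction n with
    | zero => rfl
    | succ n ih => rw [(hstep n).stateCount_eq, ih]
  obtain ⟨i, hi⟩ := exists_infinite_fiber_of_le hinf (fun n => stateCount (u n)) (stateCount (f 0))
    fun n _ => by simp [← hcount n, hfu n]
  obtain ⟨n₀, hn₀, rfl⟩ := hi.nonempty
  obtain ⟨l₀, r₀, -, hl₀⟩ := hS n₀ hn₀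
  obtain ⟨b₀, hb₀⟩ := exists_blockAt_W (u n₀) (l₀.map ca ++ v n₀)
  obtain ⟨bs, hbs⟩ := exists_seq_of_forall_exists
    (P := fun m b => BlockAt (f (n₀ + m)) (stateCount (u n₀)) b)
    (Q := fun m b b' => (b.cycle ~r b'.cycle ∨ CycleStep R b.cycle b'.cycle) ∧
      ∀ T, stateCount (u (n₀ + m)) = stateCount (u n₀) → (l (n₀ + m), r (n₀ + m)) ∈ liftRules T →
        CycleStep T b.cycle b'.cycle)
    (by simpa [hfu n₀, (Prod.mk.inj hl₀).1] using hb₀) fun m b ⟨p, q, hpq, hp, hq⟩ => by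
      obtain ⟨b', hb', hcyc⟩ := exists_blockAt_step (hlr (n₀ + m)) ((hfu _).symm.trans hpq) hq
      rw [hp, ← hfv] at hb'
      exact ⟨b', hb', by rwa [hp] at hcyc⟩
  refine not_relTerminating_of_absorbing (E := (· ~r ·)) (fun _ _ _ h e => h.isRotated_right e)
    (fun _ _ _ h e => h.isRotated_right e) (fun m => (bs m).cycle) (fun m => (hbs m).2.1)
    (fun m h => h.mono hSR) ?_
  exact (infinite_setOf_add hi n₀).mono fun m hm => (hbs m).2.2 S hm.2 (hS _ hm.1)

end Completeness

open RotSym in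
theorem rotateRel_sound_and_complete_general {α : Type*} (S R : Set (List α × List α))
    (hSR : S ⊆ R) :
    RelTerminating
        (Step { p : List (RotSym α) × List (RotSym α) |
                  ∃ l r, (l, r) ∈ S ∧ p = (symW :: l.map ca, symB :: r.map ca) })
        (Step (rotateSRS R)) ↔
      RelTerminating (CycleStep S) (CycleStep R) :=
  ⟨not_imp_not.1 (not_relTerminating_liftRules_of_cycleStep hSR),
    not_imp_not.1 (not_relTerminating_cycleStep_of_liftRules hSR)⟩

open RotSym in
/-- soundness and completeness of `rotate_rel` for relative termination. -/
theorem rotateRel_sound_and_complete {α : Type*} [Finite α] (S R : Set (List α × List α))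
    (hSR : S ⊆ R) (hfin : R.Finite) (hne : ∀ p ∈ R, p.1 ≠ []) :
    RelTerminating
        (Step { p : List (RotSym α) × List (RotSym α) |
                  ∃ l r, (l, r) ∈ S ∧ p = (symW :: l.map ca, symB :: r.map ca) })
        (Step (rotateSRS R)) ↔
      RelTerminating (CycleStep S) (CycleStep R) :=
  rotateRel_sound_and_complete_general S R hSR

end CycleRewriting
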